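/- arXiv:1308.0789 — 4 statements merged into one kernel-verified Lean document; each statement's English description precedes it below -/
import Mathlib

section
/- Let X be a real Banach space and D ⊆ X a bounded, closed, convex set containing at least two points. Then H(D, D^c) ≤ r(D,D), where H denotes the Hausdorff distance and r(D,D) is the self-radius of D. -/
open Metric Set Bornology

variable {X : Type*}

/-- `frad A x` is r(A,x) = sup of distances from x to points of A. -/
noncomputable def frad [NormedAddCommGroup X] (A : Set X) (x : X) : ℝ :=
  sSup ((fun a => dist x a) '' A)

/-- `rad A` is the (Chebyshev) radius r(A) = inf over x in the space of r(A,x). -/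
noncomputable def rad [NormedAddCommGroup X] (A : Set X) : ℝ :=
  sInf (Set.range fun x => frad A x)

/-- `selfRad A` is the self-radius r(A,A) = inf over x ∈ A of r(A,x). -/
noncomputable def selfRad [NormedAddCommGroup X] (A : Set X) : ℝ :=
  sInf ((fun x => frad A x) '' A)

/-- The ball intersection D' of D. -/
noncomputable def ballInt [NormedAddCommGroup X] (D : Set X) : Set X :=
  ⋂ x ∈ D, closedBall x (Metric.diam D)

/-- The ball hull D^c of D. -/
noncomputable def ballHull [NormedAddCommGroup X] (D : Set X) : Set X :=
  ⋂ x ∈ {y : X | D ⊆ closedBall y (Metric.diam D)}, closedBall x (Metric.diam D)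

/-- A set is diametrically maximal (complete) if adjoining any outside point
increases the diameter. -/
def IsDM [NormedAddCommGroup X] (C : Set X) : Prop :=
  ∀ x ∉ C, Metric.diam C < Metric.diam (insert x C)

/-- `C` is a completion of `D`: a diametrically maximal set containing `D`
with the same diameter. -/
def IsCompletion [NormedAddCommGroup X] (D C : Set X) : Prop :=
  IsDM C ∧ D ⊆ C ∧ Metric.diam C = Metric.diam D

lemma frad_bdd [NormedAddCommGroup X] {D : Set X} (hDb : IsBounded D) (x : X) :
    BddAbove ((fun a => dist x a) '' D) := by
  obtain ⟨R, hR⟩ := hDb.subset_closedBall x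
  exact ⟨R, by rintro v ⟨a, ha, rfl⟩; simpa [dist_comm] using hR ha⟩

lemma dist_le_frad [NormedAddCommGroup X] {D : Set X} (hDb : IsBounded D) {x a : X}
    (ha : a ∈ D) : dist x a ≤ frad D x :=
  le_csSup (frad_bdd hDb x) ⟨a, ha, rfl⟩

lemma frad_le_diam [NormedAddCommGroup X] {D : Set X} (hDb : IsBounded D) {x : X}
    (hx : x ∈ D) : frad D x ≤ Metric.diam D := by
  apply Real.sSup_le _ Metric.diam_nonneg
  rintro v ⟨a, ha, rfl⟩
  exact dist_le_diam_of_mem hDb hx ha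

lemma key [NormedAddCommGroup X] [NormedSpace ℝ X] {D : Set X} (hDb : IsBounded D)
    {y x : X} (hy : y ∈ ballHull D) (hx : x ∈ D) : dist y x ≤ frad D x := by
  set δ := Metric.diam D with hδ
  set r := frad D x with hr
  rcases eq_or_ne y x with rfl | hne
  · simpa using (dist_nonneg.trans (dist_le_frad hDb hx))
  · set d := dist x y with hd
    have hd0 : 0 < d := dist_pos.2 (Ne.symm hne)
    have hrδ : r ≤ δ := frad_le_diam hDb hx
    set t : ℝ := (δ - r) / d with ht
    have ht0 : 0 ≤ t := div_nonneg (by linarith) hd0.le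
    set c : X := y + (1 + t) • (x - y) with hc
    have hcx : dist c x = δ - r := by
      have : c - x = t • (x - y) := by
        rw [hc]; module
      rw [dist_eq_norm, this, norm_smul, Real.norm_eq_abs, abs_of_nonneg ht0,
        ← dist_eq_norm, ← hd, ht]
      field_simp
    have hDc : D ⊆ closedBall c δ := by
      intro a ha
      have h1 : dist c a ≤ dist c x + dist x a := dist_triangle c x a
      have h2 : dist x a ≤ r := dist_le_frad hDb ha
      simp only [mem_closedBall, dist_comm a c]
      linarith [hcx ▸ h1]
    have hyc : dist y c ≤ δ := by
      have := mem_iInter₂.1 hy c hDc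
      simpa [dist_comm] using this
    have hyc' : dist y c = d + (δ - r) := by
      have : y - c = -((1 + t) • (x - y)) := by rw [hc]; module
      rw [dist_eq_norm, this, norm_neg, norm_smul, Real.norm_eq_abs,
        abs_of_nonneg (by linarith), ← dist_eq_norm, ← hd, ht]
      field_simp
    rw [dist_comm, ← hd]
    linarith [hyc' ▸ hyc]

lemma frad_nonneg [NormedAddCommGroup X] {D : Set X} (hDb : IsBounded D)
    (hne : D.Nonempty) (x : X) : 0 ≤ frad D x := by
  obtain ⟨a, ha⟩ := hne
  exact dist_nonneg.trans (dist_le_frad hDb ha)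


/-- H(D, D^c) ≤ r(D,D). -/
theorem stmt3 [NormedAddCommGroup X] [NormedSpace ℝ X] [CompleteSpace X]
    (D : Set X) (hDb : IsBounded D) (hDcl : IsClosed D) (hDcv : Convex ℝ D)
    (hDnt : D.Nontrivial) :
    Metric.hausdorffDist D (ballHull D) ≤ selfRad D := by
  rw [selfRad]
  have hne : D.Nonempty := hDnt.nonempty
  have hsub : D ⊆ ballHull D := by
    intro y hy
    exact mem_iInter₂.2 fun c hc => hc hy
  have hself0 : 0 ≤ sInf ((fun x => frad D x) '' D) := by
    apply Real.sInf_nonneg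
    rintro v ⟨x, hx, rfl⟩
    exact frad_nonneg hDb hne x
  apply Metric.hausdorffDist_le_of_infDist hself0
  · intro x hx
    have h := infDist_le_dist_of_mem (x := x) (hsub hx)
    simp only [dist_self] at h
    linarith
  · intro y hy
    apply le_csInf (hne.image _)
    rintro v ⟨x, hx, rfl⟩
    exact (infDist_le_dist_of_mem hx).trans (key hDb hy hx)
end

section
/- Let X be a real Banach space and let A ⊆ B ⊆ X be bounded, closed, convex sets containing at least two points with δ(A) = δ(B). If A has a unique completion (equivalently, A^c = A'), then B has a unique completion, and it coincides with the unique completion of A. -/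
open Metric Set Bornology

variable {X : Type*}

theorem exists_completion' {X : Type*} [NormedAddCommGroup X] (D : Set X) (hDb : IsBounded D)
    (hDne : D.Nonempty) :
    ∃ C, (∀ x ∉ C, Metric.diam C < Metric.diam (insert x C)) ∧ D ⊆ C ∧
      Metric.diam C = Metric.diam D := by
  obtain ⟨p, hp⟩ := hDne
  set d := Metric.diam D with hdd
  set S : Set (Set X) := {E | D ⊆ E ∧ IsBounded E ∧ Metric.diam E ≤ d} with hS
  have hchain : ∀ c ⊆ S, IsChain (· ⊆ ·) c → c.Nonempty →
      ∃ ub ∈ S, ∀ s ∈ c, s ⊆ ub := by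
    intro c hcS hchain hcne
    refine ⟨⋃₀ c, ⟨?_, ?_, ?_⟩, fun E' hE' => subset_sUnion_of_mem hE'⟩
    · obtain ⟨E, hEc⟩ := hcne
      exact (hcS hEc).1.trans (subset_sUnion_of_mem hEc)
    · apply Bornology.IsBounded.subset (Metric.isBounded_closedBall (x := p) (r := d))
      rintro q ⟨E, hEc, hqE⟩
      have hES := hcS hEc
      have : dist q p ≤ Metric.diam E := Metric.dist_le_diam_of_mem hES.2.1 hqE (hES.1 hp)
      exact mem_closedBall.mpr (this.trans hES.2.2)
    · refine Metric.diam_le_of_forall_dist_le Metric.diam_nonneg ?_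
      rintro q ⟨E1, hE1, hq⟩ r ⟨E2, hE2, hr⟩
      rcases hchain.total hE1 hE2 with hle | hle
      · have hES := hcS hE2
        exact (Metric.dist_le_diam_of_mem hES.2.1 (hle hq) hr).trans hES.2.2
      · have hES := hcS hE1
        exact (Metric.dist_le_diam_of_mem hES.2.1 hq (hle hr)).trans hES.2.2
  obtain ⟨M, hDM, hMS, hmax⟩ := zorn_subset_nonempty S hchain D ⟨subset_rfl, hDb, le_rfl⟩
  · obtain ⟨hDM', hMb, hMd⟩ := hMS
    have hdiam : Metric.diam M = d := le_antisymm hMd (Metric.diam_mono hDM' hMb)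
    refine ⟨M, ?_, hDM', hdiam⟩
    intro x hx
    by_contra h
    push_neg at h
    have hb : IsBounded (insert x M) := hMb.insert x
    have hmem : insert x M ∈ S :=
      ⟨hDM'.trans (subset_insert x M), hb, hdiam ▸ h⟩
    have := hmax hmem (subset_insert x M)
    exact hx (this (mem_insert x M))

/-- if A ⊆ B, δ(A) = δ(B) and A has a unique completion, then B has a
unique completion, which coincides with the unique completion of A. -/
theorem stmt13 [NormedAddCommGroup X] [NormedSpace ℝ X] [CompleteSpace X]
    (A B : Set X)
    (hAb : IsBounded A) (hAcl : IsClosed A) (hAcv : Convex ℝ A) (hAnt : A.Nontrivial)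
    (hBb : IsBounded B) (hBcl : IsClosed B) (hBcv : Convex ℝ B) (hBnt : B.Nontrivial)
    (hAB : A ⊆ B) (hd : Metric.diam A = Metric.diam B)
    (hu : ∃! C : Set X, IsCompletion A C) :
    ∃ C : Set X, IsCompletion A C ∧ ∀ C' : Set X, IsCompletion B C' ↔ C' = C := by
  obtain ⟨C, hC, huniq⟩ := hu
  have key : ∀ C', IsCompletion B C' → IsCompletion A C' := by
    rintro C' ⟨hdm, hBC, hdC⟩
    exact ⟨hdm, hAB.trans hBC, by rw [hdC, hd]⟩
  obtain ⟨C0, hC0dm, hBC0, hC0d⟩ := exists_completion' B hBb hBnt.nonempty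
  have hC0 : IsCompletion A C0 := key C0 ⟨hC0dm, hBC0, hC0d⟩
  have hC0C : C0 = C := huniq C0 hC0
  refine ⟨C, hC, fun C' => ⟨fun h => huniq C' (key C' h), fun h => ?_⟩⟩
  subst h
  exact hC0C ▸ ⟨hC0dm, hBC0, hC0d⟩
end

section
/- Let X be a real Banach space and let A, B ⊆ X be bounded, closed, convex sets containing at least two points. Then A^c = B^c if and only if A' = B'. -/
/-!
Every point of the ball hull `D^c` lies within `δ(D)` of every point of `D`, so `D^c ⊆ D'`;
hence `δ(D^c) = δ(D)`, and a ball of radius `δ(D)` contains `D` exactly when it contains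
`D^c`. Thus `D'` is also the ball intersection of `D^c` and `A^c = B^c` gives `A' = B'`.
Conversely `D^c` is the intersection of the balls of radius `δ(D)` centred in `D'`, so it
suffices that `D'` determines `δ(D)`. If `B' ⊆ A'`, push a point slightly beyond a nearly
diametral pair of `A` to leave `A'`, hence `B'`; it is then more than `δ(B)` from some
`b ∈ B ⊆ A'`, yet within `δ(A) + ε` of it, so `δ(B) ≤ δ(A)`.
-/

open Metric Set Bornology

variable {X : Type*}

section NormedGroup

variable [NormedAddCommGroup X] {D : Set X} {y : X}

lemma mem_ballInt_iff : y ∈ ballInt D ↔ D ⊆ closedBall y (diam D) := by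
  simp only [ballInt, mem_iInter, mem_closedBall, subset_def, dist_comm y]

lemma subset_ballInt (hD : IsBounded D) : D ⊆ ballInt D := fun _ hx =>
  mem_ballInt_iff.2 fun _ hz => mem_closedBall.2 (dist_le_diam_of_mem hD hz hx)

lemma subset_ballHull : D ⊆ ballHull D := by
  intro x hx
  simp only [ballHull, mem_iInter]
  exact fun _ hy => hy hx

lemma ballHull_subset_closedBall (hy : D ⊆ closedBall y (diam D)) :
    ballHull D ⊆ closedBall y (diam D) := by
  intro v hv
  simp only [ballHull, mem_iInter] at hv
  exact hv y hy

lemma ballHull_eq_biInter_ballInt : ballHull D = ⋂ y ∈ ballInt D, closedBall y (diam D) := by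
  simp only [ballHull, ← mem_ballInt_iff, ofPred_mem_eq]

lemma ballHull_subset_ballInt (hD : IsBounded D) : ballHull D ⊆ ballInt D := fun _ hv =>
  mem_ballInt_iff.2 fun _ hx => mem_closedBall_comm.1 <|
    ballHull_subset_closedBall (mem_ballInt_iff.1 (subset_ballInt hD hx)) hv

lemma dist_le_diam_of_mem_ballHull (hD : IsBounded D) {u v : X} (hu : u ∈ ballHull D)
    (hv : v ∈ ballHull D) : dist u v ≤ diam D :=
  ballHull_subset_closedBall (mem_ballInt_iff.1 (ballHull_subset_ballInt hD hv)) hu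

lemma diam_ballHull (hD : IsBounded D) : diam (ballHull D) = diam D := by
  have hbdd : IsBounded (ballHull D) :=
    isBounded_iff.2 ⟨_, fun _ hu _ hv => dist_le_diam_of_mem_ballHull hD hu hv⟩
  exact le_antisymm (diam_le_of_forall_dist_le diam_nonneg fun _ hu _ hv =>
    dist_le_diam_of_mem_ballHull hD hu hv) (diam_mono subset_ballHull hbdd)

lemma ballInt_ballHull (hD : IsBounded D) : ballInt (ballHull D) = ballInt D := by
  ext y
  rw [mem_ballInt_iff, mem_ballInt_iff, diam_ballHull hD]
  exact ⟨subset_ballHull.trans, ballHull_subset_closedBall⟩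

end NormedGroup

section NormedSpace

variable [NormedAddCommGroup X] [NormedSpace ℝ X] {A B : Set X}

lemma exists_notMem_ballInt_dist_le (hA : IsBounded A) (hA' : A.Nontrivial) {ε : ℝ}
    (hε : 0 < ε) : ∃ a ∈ A, ∃ p ∉ ballInt A, dist p a ≤ ε := by
  have hdiam : 0 < diam A := by
    obtain ⟨x, hx, y, hy, hxy⟩ := hA'
    exact (dist_pos.2 hxy).trans_le (dist_le_diam_of_mem hA hx hy)
  obtain ⟨a, ha, a', ha', hfar⟩ : ∃ a ∈ A, ∃ a' ∈ A, max (diam A - ε) 0 < dist a a' := by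
    by_contra! hnear
    have := diam_le_of_forall_dist_le (le_max_right _ _) hnear
    exact this.not_gt (max_lt (by linarith) hdiam)
  set d := dist a a'
  have hd : 0 < d := (le_max_right _ _).trans_lt hfar
  -- `p` lies on the line through `a'` and `a`, at distance `ε` beyond `a`.
  set p := AffineMap.lineMap a' a (1 + ε / d)
  have hpa : dist p a = ε := by
    rw [dist_lineMap_right, dist_comm a' a, sub_add_cancel_left, norm_neg, Real.norm_eq_abs,
      abs_of_pos (div_pos hε hd), div_mul_cancel₀ _ hd.ne']
  have hpa' : dist p a' = d + ε := by
    rw [dist_lineMap_left, dist_comm a' a, Real.norm_eq_abs, abs_of_pos (by positivity),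
      add_mul, one_mul, div_mul_cancel₀ _ hd.ne']
  refine ⟨a, ha, p, fun hp => ?_, hpa.le⟩
  have := mem_closedBall'.1 (mem_ballInt_iff.1 hp ha')
  linarith [le_max_left (diam A - ε) 0]

lemma diam_le_of_ballInt_subset (hA : IsBounded A) (hA' : A.Nontrivial) (hB : IsBounded B)
    (h : ballInt B ⊆ ballInt A) : diam B ≤ diam A := by
  refine le_of_forall_pos_le_add fun ε hε => ?_
  obtain ⟨a, ha, p, hp, hpa⟩ := exists_notMem_ballInt_dist_le hA hA' hε
  obtain ⟨b, hb, hbp⟩ : ∃ b ∈ B, diam B < dist p b := by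
    by_contra! hnear
    exact hp (h (mem_ballInt_iff.2 fun b hb => mem_closedBall'.2 (hnear b hb)))
  have hba : dist b a ≤ diam A :=
    mem_closedBall'.1 (mem_ballInt_iff.1 (h (subset_ballInt hB hb)) ha)
  linarith [dist_triangle_right p b a]

end NormedSpace

theorem stmt14_general [NormedAddCommGroup X] [NormedSpace ℝ X]
    (A B : Set X)
    (hAb : IsBounded A) (hAnt : A.Nontrivial)
    (hBb : IsBounded B) (hBnt : B.Nontrivial) :
    ballHull A = ballHull B ↔ ballInt A = ballInt B := by
  constructor
  · intro h
    rw [← ballInt_ballHull hAb, h, ballInt_ballHull hBb]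
  · intro h
    have hdiam : diam A = diam B :=
      le_antisymm (diam_le_of_ballInt_subset hBb hBnt hAb h.le)
        (diam_le_of_ballInt_subset hAb hAnt hBb h.ge)
    rw [ballHull_eq_biInter_ballInt, ballHull_eq_biInter_ballInt, h, hdiam]

/-- A^c = B^c if and only if A' = B'. -/
theorem stmt14 [NormedAddCommGroup X] [NormedSpace ℝ X] [CompleteSpace X]
    (A B : Set X)
    (hAb : IsBounded A) (hAcl : IsClosed A) (hAcv : Convex ℝ A) (hAnt : A.Nontrivial)
    (hBb : IsBounded B) (hBcl : IsClosed B) (hBcv : Convex ℝ B) (hBnt : B.Nontrivial) :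
    ballHull A = ballHull B ↔ ballInt A = ballInt B :=
  stmt14_general A B hAb hAnt hBb hBnt
end

section
/- Let X be a real Banach space and D ⊆ X a bounded, closed, convex set containing at least two points. Then δ(C_D) ≤ 2·r(D) − 2·δ(D) + δ(D'), where C_D is the set of centers of D. -/
open Metric Set Bornology

variable {X : Type*}

set_option linter.unusedSectionVars false

section aux
variable [NormedAddCommGroup X] [NormedSpace ℝ X]

lemma bdd_frad (A : Set X) (hA : IsBounded A) (x : X) :
    BddAbove ((fun a => dist x a) '' A) := by
  obtain ⟨C, hC⟩ := hA.subset_closedBall x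
  exact ⟨C, by rintro _ ⟨a, ha, rfl⟩; simpa [dist_comm] using hC ha⟩

lemma dist_le_frad_s17 {A : Set X} (hA : IsBounded A) {d : X} (hd : d ∈ A) (x : X) :
    dist x d ≤ frad A x :=
  le_csSup (bdd_frad A hA x) ⟨d, hd, rfl⟩

lemma rad_le_frad {A : Set X} (hAne : A.Nonempty) (hAb : IsBounded A) (x : X) :
    rad A ≤ frad A x := by
  obtain ⟨d, hd⟩ := hAne
  refine csInf_le ⟨0, ?_⟩ ⟨x, rfl⟩
  rintro _ ⟨y, rfl⟩
  exact le_trans dist_nonneg (dist_le_frad_s17 hAb hd y)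

lemma rad_le_diam {A : Set X} (hAne : A.Nonempty) (hAb : IsBounded A) :
    rad A ≤ Metric.diam A := by
  obtain ⟨d, hd⟩ := hAne
  refine le_trans (rad_le_frad ⟨d, hd⟩ hAb d) (csSup_le ⟨_, ⟨d, hd, rfl⟩⟩ ?_)
  rintro _ ⟨a, ha, rfl⟩
  exact dist_le_diam_of_mem hAb hd ha

lemma mem_ballInt_of {D : Set X} {x v : X}
    (h : ∀ d ∈ D, dist x d + ‖v‖ ≤ Metric.diam D) : x + v ∈ ballInt D := by
  refine Set.mem_iInter₂.2 fun d hd => ?_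
  have : dist (x + v) d ≤ ‖v‖ + dist x d := by
    calc dist (x + v) d ≤ dist (x + v) x + dist x d := dist_triangle _ _ _
    _ = ‖v‖ + dist x d := by rw [dist_eq_norm]; simp
  exact mem_closedBall.2 (this.trans (by linarith [h d hd]))

end aux

/-- δ(C_D) ≤ 2r(D) − 2δ(D) + δ(D'), where C_D is the set of centers. -/
theorem stmt17 [NormedAddCommGroup X] [NormedSpace ℝ X] [CompleteSpace X]
    (D : Set X) (hDb : IsBounded D) (hDcl : IsClosed D) (hDcv : Convex ℝ D)
    (hDnt : D.Nontrivial) :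
    Metric.diam {c : X | frad D c = rad D} ≤
      2 * rad D - 2 * Metric.diam D + Metric.diam (ballInt D) := by
  obtain ⟨d₀, hd₀, d₁, hd₁, hdd⟩ := hDnt
  have hDne : D.Nonempty := ⟨d₀, hd₀⟩
  have hrd : rad D ≤ Metric.diam D := rad_le_diam hDne hDb
  -- a fixed unit vector
  have hnu : ‖(‖d₀ - d₁‖⁻¹ • (d₀ - d₁) : X)‖ = 1 := by
    rw [norm_smul, norm_inv, norm_norm, inv_mul_cancel₀]
    exact norm_ne_zero_iff.2 (sub_ne_zero.2 hdd)
  -- ballInt is bounded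
  have hBIb : IsBounded (ballInt D) :=
    (isBounded_closedBall (x := d₀) (r := Metric.diam D)).subset
      fun y hy => Set.mem_iInter₂.1 hy d₀ hd₀
  -- key nonnegativity of RHS: 2*(δ - r) ≤ diam (ballInt D)
  have hkey : 2 * (Metric.diam D - rad D) ≤ Metric.diam (ballInt D) := by
    refine le_of_forall_pos_le_add fun ε hε => ?_
    by_cases ht : Metric.diam D - rad D - ε / 2 ≤ 0
    · have := Metric.diam_nonneg (s := ballInt D)
      linarith
    · push_neg at ht
      -- find an almost-center
      have hne : (Set.range fun x => frad D x).Nonempty := ⟨frad D d₀, d₀, rfl⟩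
      have hlt : sInf (Set.range fun x => frad D x) < rad D + ε / 2 := by
        have : rad D < rad D + ε / 2 := by linarith
        rwa [rad] at this
      obtain ⟨_, ⟨x, rfl⟩, hx⟩ := exists_lt_of_csInf_lt hne hlt
      have hxd : ∀ d ∈ D, dist x d ≤ rad D + ε / 2 :=
        fun d hd => (dist_le_frad_s17 hDb hd x).trans hx.le
      have h1 : x + (Metric.diam D - rad D - ε / 2) • (‖d₀ - d₁‖⁻¹ • (d₀ - d₁)) ∈ ballInt D := by
        refine mem_ballInt_of fun d hd => ?_
        rw [norm_smul, hnu, Real.norm_eq_abs, abs_of_pos ht, mul_one]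
        linarith [hxd d hd]
      have h2 : x + (-(Metric.diam D - rad D - ε / 2)) • (‖d₀ - d₁‖⁻¹ • (d₀ - d₁)) ∈ ballInt D := by
        refine mem_ballInt_of fun d hd => ?_
        rw [norm_smul, hnu, Real.norm_eq_abs, abs_neg, abs_of_pos ht, mul_one]
        linarith [hxd d hd]
      have hdist : dist (x + (Metric.diam D - rad D - ε / 2) • (‖d₀ - d₁‖⁻¹ • (d₀ - d₁)))
          (x + (-(Metric.diam D - rad D - ε / 2)) • (‖d₀ - d₁‖⁻¹ • (d₀ - d₁)))
          = 2 * (Metric.diam D - rad D - ε / 2) := by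
        rw [dist_eq_norm]
        have heq : x + (Metric.diam D - rad D - ε / 2) • (‖d₀ - d₁‖⁻¹ • (d₀ - d₁))
            - (x + (-(Metric.diam D - rad D - ε / 2)) • (‖d₀ - d₁‖⁻¹ • (d₀ - d₁)))
            = (2 * (Metric.diam D - rad D - ε / 2)) • (‖d₀ - d₁‖⁻¹ • (d₀ - d₁)) := by
          module
        rw [heq, norm_smul, hnu, Real.norm_eq_abs, abs_of_pos (by linarith), mul_one]
      have hle := dist_le_diam_of_mem hBIb h1 h2
      rw [hdist] at hle
      linarith
  refine Metric.diam_le_of_forall_dist_le (by linarith) fun c₁ h₁ c₂ h₂ => ?_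
  simp only [Set.mem_setOf_eq] at h₁ h₂
  by_cases hc : c₁ = c₂
  · subst hc; simp only [dist_self]; linarith
  · have hc₁ : ∀ d ∈ D, dist c₁ d ≤ rad D := fun d hd => h₁ ▸ dist_le_frad_s17 hDb hd c₁
    have hc₂ : ∀ d ∈ D, dist c₂ d ≤ rad D := fun d hd => h₂ ▸ dist_le_frad_s17 hDb hd c₂
    have hcc : (0:ℝ) < ‖c₁ - c₂‖ := norm_pos_iff.2 (sub_ne_zero.2 hc)
    have hnw : ‖(‖c₁ - c₂‖⁻¹ • (c₁ - c₂) : X)‖ = 1 := by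
      rw [norm_smul, norm_inv, norm_norm, inv_mul_cancel₀ hcc.ne']
    have hδr : (0:ℝ) ≤ Metric.diam D - rad D := by linarith
    have h1 : c₁ + (Metric.diam D - rad D) • (‖c₁ - c₂‖⁻¹ • (c₁ - c₂)) ∈ ballInt D := by
      refine mem_ballInt_of fun d hd => ?_
      rw [norm_smul, hnw, Real.norm_eq_abs, abs_of_nonneg hδr, mul_one]
      linarith [hc₁ d hd]
    have h2 : c₂ + (-(Metric.diam D - rad D)) • (‖c₁ - c₂‖⁻¹ • (c₁ - c₂)) ∈ ballInt D := by
      refine mem_ballInt_of fun d hd => ?_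
      rw [norm_smul, hnw, Real.norm_eq_abs, abs_neg, abs_of_nonneg hδr, mul_one]
      linarith [hc₂ d hd]
    have hdist : dist (c₁ + (Metric.diam D - rad D) • (‖c₁ - c₂‖⁻¹ • (c₁ - c₂)))
        (c₂ + (-(Metric.diam D - rad D)) • (‖c₁ - c₂‖⁻¹ • (c₁ - c₂)))
        = dist c₁ c₂ + 2 * (Metric.diam D - rad D) := by
      have heq : c₁ + (Metric.diam D - rad D) • (‖c₁ - c₂‖⁻¹ • (c₁ - c₂))
          - (c₂ + (-(Metric.diam D - rad D)) • (‖c₁ - c₂‖⁻¹ • (c₁ - c₂)))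
          = (1 + 2 * (Metric.diam D - rad D) * ‖c₁ - c₂‖⁻¹) • (c₁ - c₂) := by
        module
      have hnn : (0:ℝ) ≤ 1 + 2 * (Metric.diam D - rad D) * ‖c₁ - c₂‖⁻¹ := by
        have hi : (0:ℝ) ≤ ‖c₁ - c₂‖⁻¹ := inv_nonneg.2 hcc.le
        nlinarith
      rw [dist_eq_norm, heq, norm_smul, Real.norm_eq_abs, abs_of_nonneg hnn,
        dist_eq_norm, add_mul, one_mul, mul_assoc, inv_mul_cancel₀ hcc.ne', mul_one]
    have hle := dist_le_diam_of_mem hBIb h1 h2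
    rw [hdist] at hle
    linarith
end
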